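/- Let R be a commutative reduced ring whose annihilating-ideal graph has no infinite clique. Then R has finitely many minimal prime ideals; equivalently, (0) is a finite intersection of prime ideals of R. -/

import Mathlib

/-!
Suppose `R` has infinitely many minimal primes, and call an ideal `I` *large* when infinitely many
minimal primes do not contain it. In a reduced ring every element `a` of a minimal prime `P` is
killed by some `x ∉ P`. Hence if `I` is large, picking `a ∈ I` lying in one minimal prime avoiding
`I` but not in another, the ideals `(a)` and `I ∩ Ann(a)` are nonzero, annihilate each other, lie in
`I`, and every minimal prime avoiding `I` avoids one of them; so one of the two is again large.
Iterating from `I = R` peels off an infinite sequence of nonzero ideals `C₀, C₁, …` with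
`Cₘ Cₙ = 0` for `m ≠ n`; they are distinct because `R` is reduced, so they form an infinite clique.
-/

namespace Ideal

theorem exists_pairwise_mul_eq_bot_of_forall_exists {R : Type*} [CommSemiring R]
    (p : Ideal R → Prop) {I₀ : Ideal R} (h₀ : p I₀)
    (step : ∀ I, p I → ∃ C J : Ideal R, C ≠ ⊥ ∧ C ≤ I ∧ J ≤ I ∧ p J ∧ C * J = ⊥) :
    ∃ C : ℕ → Ideal R, (∀ n, C n ≠ ⊥) ∧ Pairwise fun m n => C m * C n = ⊥ := by
  choose! c next hc hcI hnext hp hmul using step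
  let I : ℕ → Ideal R := fun n => next^[n] I₀
  have hI_succ (n : ℕ) : I (n + 1) = next (I n) := Function.iterate_succ_apply' next n I₀
  have hpI (n : ℕ) : p (I n) := by
    induction n with
    | zero => exact h₀
    | succ n ih => exact hI_succ n ▸ hp _ ih
  have hanti : Antitone I := antitone_nat_of_succ_le fun n => hI_succ n ▸ hnext _ (hpI n)
  have hlt {m n : ℕ} (hmn : m < n) : c (I m) * c (I n) = ⊥ := by
    have hle : c (I n) ≤ next (I m) := hI_succ m ▸ (hcI _ (hpI n)).trans (hanti hmn.nat_succ_le)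
    exact le_bot_iff.mp ((mul_mono_right hle).trans (hmul _ (hpI m)).le)
  refine ⟨fun n => c (I n), fun n => hc _ (hpI n), fun m n hmn => ?_⟩
  rcases hmn.lt_or_gt with h | h
  · exact hlt h
  · exact (mul_comm _ _).trans (hlt h)

variable {R : Type*} [CommRing R]

def minimalPrimesNotContaining (I : Ideal R) : Set (Ideal R) :=
  {P ∈ minimalPrimes R | ¬ I ≤ P}

theorem minimalPrimesNotContaining_top :
    minimalPrimesNotContaining (⊤ : Ideal R) = minimalPrimes R :=
  Set.sep_eq_self_iff_mem_true.mpr fun _ hP => fun h => hP.1.1.ne_top (top_le_iff.mp h)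

variable [IsReduced R]

theorem exists_notMem_mul_eq_zero_of_mem_minimalPrimes {P : Ideal R} (hP : P ∈ minimalPrimes R)
    {a : R} (ha : a ∈ P) : ∃ x ∉ P, x * a = 0 := by
  have hPp : P.IsPrime := hP.1.1
  let S : Submonoid R := P.primeCompl ⊔ Submonoid.powers a
  have hzero : (0 : R) ∈ S := by
    by_contra h0
    have hdisj : Disjoint ((⊥ : Ideal R) : Set R) S := by
      simpa [Set.disjoint_left] using h0
    obtain ⟨Q, hQ, -, hQS⟩ := exists_le_prime_disjoint ⊥ S hdisj
    -- `Q` misses `P.primeCompl`, so `Q ≤ P`; minimality forces `Q = P`, but `a ∈ P` lies in `S`.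
    have hQP : Q ≤ P := fun y hy => by
      by_contra hyP
      exact Set.disjoint_left.mp hQS hy
        (Submonoid.mem_sup_left (show y ∈ P.primeCompl from hyP))
    exact Set.disjoint_left.mp hQS (hP.2 ⟨hQ, bot_le⟩ hQP ha)
      (Submonoid.mem_sup_right (Submonoid.mem_powers a))
  obtain ⟨x, hx, _, ⟨n, rfl⟩, hxa⟩ := Submonoid.mem_sup.mp hzero
  refine ⟨x, hx, IsNilpotent.eq_zero ⟨n + 1, ?_⟩⟩
  calc (x * a) ^ (n + 1) = x ^ n * a * (x * a ^ n) := by ring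
    _ = 0 := by rw [hxa, mul_zero]

theorem not_inf_annihilator_le_of_mem {I P : Ideal R} (hP : P ∈ minimalPrimes R) (hIP : ¬ I ≤ P)
    {a : R} (ha : a ∈ P) : ¬ I ⊓ (span {a}).annihilator ≤ P := by
  obtain ⟨x, hxP, hxa⟩ := exists_notMem_mul_eq_zero_of_mem_minimalPrimes hP ha
  obtain ⟨b, hbI, hbP⟩ := SetLike.not_le_iff_exists.mp hIP
  have hmem : x * b ∈ I ⊓ (span {a}).annihilator :=
    ⟨I.mul_mem_left x hbI, (Submodule.mem_annihilator_span_singleton a (x * b)).mpr <| by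
      rw [smul_eq_mul, mul_right_comm, hxa, zero_mul]⟩
  exact fun hle => (hP.1.1.mem_or_mem (hle hmem)).elim hxP hbP

theorem exists_mul_eq_bot_minimalPrimesNotContaining_subset_union {I : Ideal R}
    (hI : (minimalPrimesNotContaining I).Nontrivial) :
    ∃ J K : Ideal R, J ≠ ⊥ ∧ K ≠ ⊥ ∧ J ≤ I ∧ K ≤ I ∧ J * K = ⊥ ∧
      minimalPrimesNotContaining I ⊆
        minimalPrimesNotContaining J ∪ minimalPrimesNotContaining K := by
  obtain ⟨P, ⟨hPmin, hIP⟩, Q, ⟨hQmin, hIQ⟩, hPQ⟩ := hI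
  have hQP : ¬ Q ≤ P := fun hle => hPQ (le_antisymm (hPmin.2 ⟨hQmin.1.1, bot_le⟩ hle) hle)
  obtain ⟨a, ⟨haI, haQ⟩, haP⟩ :=
    SetLike.not_le_iff_exists.mp (mt hPmin.1.1.inf_le.mp (not_or.mpr ⟨hIP, hQP⟩))
  refine ⟨span {a}, I ⊓ (span {a}).annihilator, ?_, ?_, span_le.mpr (by simpa using haI),
    inf_le_left, ?_, ?_⟩
  · exact fun h => haP (span_singleton_eq_bot.mp h ▸ P.zero_mem)
  · exact fun h => not_inf_annihilator_le_of_mem hQmin hIQ haQ (h ▸ bot_le)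
  · exact le_bot_iff.mp ((mul_mono_right inf_le_right).trans (Submodule.mul_annihilator _).le)
  · rintro P' ⟨hP'min, hIP'⟩
    by_cases haP' : a ∈ P'
    · exact Or.inr ⟨hP'min, not_inf_annihilator_le_of_mem hP'min hIP' haP'⟩
    · exact Or.inl ⟨hP'min, fun hle => haP' (hle (subset_span rfl))⟩

theorem exists_mul_eq_bot_infinite_minimalPrimesNotContaining {I : Ideal R}
    (hI : (minimalPrimesNotContaining I).Infinite) :
    ∃ C J : Ideal R, C ≠ ⊥ ∧ C ≤ I ∧ J ≤ I ∧ (minimalPrimesNotContaining J).Infinite ∧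
      C * J = ⊥ := by
  obtain ⟨J, K, hJ, hK, hJI, hKI, hJK, hcover⟩ :=
    exists_mul_eq_bot_minimalPrimesNotContaining_subset_union hI.nontrivial
  rcases Set.infinite_union.mp (hI.mono hcover) with hJinf | hKinf
  · exact ⟨K, J, hK, hKI, hJI, hJinf, mul_comm J K ▸ hJK⟩
  · exact ⟨J, K, hJ, hJI, hKI, hKinf, hJK⟩

theorem injective_of_pairwise_mul_eq_bot {ι : Type*} {C : ι → Ideal R} (hC : ∀ i, C i ≠ ⊥)
    (hmul : Pairwise fun i j => C i * C j = ⊥) : Function.Injective C := by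
  intro i j hij
  by_contra hne
  exact hC i ((pow_eq_bot two_ne_zero).mp (by rw [sq]; nth_rewrite 2 [hij]; exact hmul hne))

theorem iInf_minimalPrimes_eq_bot : ⨅ P ∈ minimalPrimes R, P = ⊥ := by
  rw [← sInf_eq_iInf, minimalPrimes, sInf_minimalPrimes, radical_bot_of_isReduced]

end Ideal

open Ideal in
theorem finitely_many_minimal_primes_of_no_infinite_clique {R : Type*} [CommRing R]
    [IsReduced R]
    (h : ¬ ∃ S : Set (Ideal R), S.Infinite ∧ (∀ I ∈ S, I ≠ ⊥) ∧
      ∀ I ∈ S, ∀ J ∈ S, I ≠ J → I * J = ⊥) :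
    (minimalPrimes R).Finite ∧
      ∃ s : Finset (Ideal R), (∀ P ∈ s, P.IsPrime) ∧ (⨅ P ∈ s, P) = ⊥ := by
  have hfin : (minimalPrimes R).Finite := by
    by_contra hinf
    obtain ⟨C, hC, hmul⟩ := exists_pairwise_mul_eq_bot_of_forall_exists
      (fun I => (minimalPrimesNotContaining I).Infinite) (I₀ := ⊤)
      (minimalPrimesNotContaining_top (R := R) ▸ hinf)
      fun _ => exists_mul_eq_bot_infinite_minimalPrimesNotContaining
    refine h ⟨Set.range C,
      Set.infinite_range_of_injective (injective_of_pairwise_mul_eq_bot hC hmul),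
      Set.forall_mem_range.mpr hC, ?_⟩
    rintro _ ⟨m, rfl⟩ _ ⟨n, rfl⟩ hne
    exact hmul (ne_of_apply_ne C hne)
  refine ⟨hfin, hfin.toFinset, fun P hP => (hfin.mem_toFinset.mp hP).1.1, ?_⟩
  simpa only [Set.Finite.mem_toFinset] using iInf_minimalPrimes_eq_bot
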